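/- arXiv:1003.2044 — 5 statements merged into one kernel-verified Lean document; each statement's English description precedes it below -/
import Mathlib

section
/- Let {x, x₁} be a Bertrand D-pair with constant λ ≠ 0, correspondence s and angle function θ. Then for every s₁ with 1 − λ k_{g₁}(s₁) ≠ 0 and cos θ(s₁) ≠ 0, the invariants satisfy −λ τ_{g₁}'(s₁) = (((1 − λ k_{g₁}(s₁))² + λ² τ_{g₁}(s₁)²)/(1 − λ k_{g₁}(s₁))) · (k_{n₁}(s₁) − k_n(s(s₁)) · (1 − λ k_{g₁}(s₁))/cos θ(s₁)) + λ² τ_{g₁}(s₁) k_{g₁}'(s₁)/(1 − λ k_{g₁}(s₁)). -/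
noncomputable section

abbrev E3 := EuclideanSpace ℝ (Fin 3)

/-- Cross product on `EuclideanSpace ℝ (Fin 3)`. -/
def cross3 (a b : E3) : E3 :=
  WithLp.toLp 2 ![a 1 * b 2 - a 2 * b 1, a 2 * b 0 - a 0 * b 2, a 0 * b 1 - a 1 * b 0]

/-- Darboux frame vector `g = n × T`, where `T = x'`. -/
def gvec (x n : ℝ → E3) : ℝ → E3 := fun t => cross3 (n t) (deriv x t)

/-- Geodesic curvature `k_g = ⟪T', g⟫`. -/
def geodCurv (x n : ℝ → E3) : ℝ → ℝ := fun t => (inner ℝ (deriv (deriv x) t) (gvec x n t) : ℝ)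

/-- Normal curvature `k_n = ⟪T', n⟫`. -/
def normCurv (x n : ℝ → E3) : ℝ → ℝ := fun t => (inner ℝ (deriv (deriv x) t) (n t) : ℝ)

/-- Geodesic torsion `τ_g = ⟪g', n⟫`. -/
def geodTors (x n : ℝ → E3) : ℝ → ℝ := fun t => (inner ℝ (deriv (gvec x n) t) (n t) : ℝ)

/-- A unit-speed smooth curve `x` on an oriented surface, encoded by a smooth unit
normal field `n` along `x` orthogonal to the tangent. -/
def IsDarbouxCurve (x n : ℝ → E3) : Prop :=
  ContDiff ℝ (⊤ : ℕ∞) x ∧ ContDiff ℝ (⊤ : ℕ∞) n ∧ (∀ t, ‖deriv x t‖ = 1) ∧ (∀ t, ‖n t‖ = 1) ∧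
    ∀ t, (inner ℝ (n t) (deriv x t) : ℝ) = 0

/-- `{x, x₁}` is a Bertrand D-pair with constant `lam ≠ 0`, smooth increasing
correspondence `s` and smooth angle function `θ`. -/
def IsBertrandDPair (x n x₁ n₁ : ℝ → E3) (lam : ℝ) (s θ : ℝ → ℝ) : Prop :=
  IsDarbouxCurve x n ∧ IsDarbouxCurve x₁ n₁ ∧ lam ≠ 0 ∧
    ContDiff ℝ (⊤ : ℕ∞) s ∧ (∀ t, 0 < deriv s t) ∧
    (∀ t, x (s t) = x₁ t + lam • gvec x₁ n₁ t) ∧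
    (∀ t, gvec x n (s t) = gvec x₁ n₁ t) ∧
    ContDiff ℝ (⊤ : ℕ∞) θ ∧
    (∀ t, deriv x (s t) = Real.cos (θ t) • deriv x₁ t - Real.sin (θ t) • n₁ t) ∧
    (∀ t, n (s t) = Real.sin (θ t) • deriv x₁ t + Real.cos (θ t) • n₁ t)

/-! ### Auxiliary lemmas -/

lemma inner3 (a b : E3) : (inner ℝ a b : ℝ) = a 0 * b 0 + a 1 * b 1 + a 2 * b 2 := by
  simp [PiLp.inner_apply, Fin.sum_univ_three, RCLike.inner_apply]; ring

lemma inner_cross_left (a b : E3) : (inner ℝ (cross3 a b) a : ℝ) = 0 := by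
  rw [inner3]
  show (a 1 * b 2 - a 2 * b 1) * a 0 + (a 2 * b 0 - a 0 * b 2) * a 1
      + (a 0 * b 1 - a 1 * b 0) * a 2 = 0
  ring

lemma inner_cross_right (a b : E3) : (inner ℝ (cross3 a b) b : ℝ) = 0 := by
  rw [inner3]
  show (a 1 * b 2 - a 2 * b 1) * b 0 + (a 2 * b 0 - a 0 * b 2) * b 1
      + (a 0 * b 1 - a 1 * b 0) * b 2 = 0
  ring

lemma contDiff_cross {f g : ℝ → E3} (hf : ContDiff ℝ (⊤ : ℕ∞) f) (hg : ContDiff ℝ (⊤ : ℕ∞) g) :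
    ContDiff ℝ (⊤ : ℕ∞) (fun t => cross3 (f t) (g t)) := by
  rw [contDiff_euclidean]
  have hf' := contDiff_euclidean.mp hf
  have hg' := contDiff_euclidean.mp hg
  intro i
  fin_cases i
  · exact ((hf' 1).mul (hg' 2)).sub ((hf' 2).mul (hg' 1))
  · exact ((hf' 2).mul (hg' 0)).sub ((hf' 0).mul (hg' 2))
  · exact ((hf' 0).mul (hg' 1)).sub ((hf' 1).mul (hg' 0))

lemma inner_deriv_zero {f g : ℝ → E3} (hf : Differentiable ℝ f) (hg : Differentiable ℝ g)
    (c : ℝ) (h : ∀ u, (inner ℝ (f u) (g u) : ℝ) = c) (t : ℝ) :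
    (inner ℝ (f t) (deriv g t) : ℝ) + (inner ℝ (deriv f t) (g t) : ℝ) = 0 := by
  have H := ((hf t).hasDerivAt.inner ℝ (hg t).hasDerivAt)
  have h2 : (fun u => (inner ℝ (f u) (g u) : ℝ)) = fun _ => c := funext h
  have h3 : deriv (fun u => (inner ℝ (f u) (g u) : ℝ)) t = 0 := by rw [h2]; simp
  rw [H.deriv] at h3
  exact h3

theorem bertrand_D_stmt_0
    (x n x₁ n₁ : ℝ → E3) (lam : ℝ) (s θ : ℝ → ℝ)
    (hpair : IsBertrandDPair x n x₁ n₁ lam s θ) :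
    ∀ t, 1 - lam * geodCurv x₁ n₁ t ≠ 0 → Real.cos (θ t) ≠ 0 →
      -lam * deriv (geodTors x₁ n₁) t =
        (((1 - lam * geodCurv x₁ n₁ t) ^ 2 + lam ^ 2 * (geodTors x₁ n₁ t) ^ 2) / (1 - lam * geodCurv x₁ n₁ t)) *
            (normCurv x₁ n₁ t - normCurv x n (s t) * (1 - lam * geodCurv x₁ n₁ t) / Real.cos (θ t)) +
          lam ^ 2 * geodTors x₁ n₁ t * deriv (geodCurv x₁ n₁) t / (1 - lam * geodCurv x₁ n₁ t) := by
  obtain ⟨⟨hx, hn, hxu, hnu, hxn⟩, ⟨hx₁, hn₁, hx₁u, hn₁u, hx₁n⟩, hlam, hs, hspos, hB1, hB2, hθ, hB3, hB4⟩ := hpair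
  replace hx : ContDiff ℝ (⊤ : ℕ∞) x := hx.of_le (by simp)
  replace hn : ContDiff ℝ (⊤ : ℕ∞) n := hn.of_le (by simp)
  replace hx₁ : ContDiff ℝ (⊤ : ℕ∞) x₁ := hx₁.of_le (by simp)
  replace hn₁ : ContDiff ℝ (⊤ : ℕ∞) n₁ := hn₁.of_le (by simp)
  replace hs : ContDiff ℝ (⊤ : ℕ∞) s := hs.of_le (by simp)
  replace hθ : ContDiff ℝ (⊤ : ℕ∞) θ := hθ.of_le (by simp)
  -- smoothness facts
  have hT₁ : ContDiff ℝ (⊤ : ℕ∞) (deriv x₁) := (contDiff_infty_iff_deriv.mp hx₁).2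
  have hT₁' : ContDiff ℝ (⊤ : ℕ∞) (deriv (deriv x₁)) := (contDiff_infty_iff_deriv.mp hT₁).2
  have hTd : ContDiff ℝ (⊤ : ℕ∞) (deriv x) := (contDiff_infty_iff_deriv.mp hx).2
  have hg₁ : ContDiff ℝ (⊤ : ℕ∞) (gvec x₁ n₁) := contDiff_cross hn₁ hT₁
  have hg₁' : ContDiff ℝ (⊤ : ℕ∞) (deriv (gvec x₁ n₁)) := (contDiff_infty_iff_deriv.mp hg₁).2
  have hK : ContDiff ℝ (⊤ : ℕ∞) (geodCurv x₁ n₁) := hT₁'.inner ℝ hg₁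
  have hτ : ContDiff ℝ (⊤ : ℕ∞) (geodTors x₁ n₁) := hg₁'.inner ℝ hn₁
  have dx₁ : Differentiable ℝ (deriv x₁) := hT₁.differentiable (by simp)
  have dn₁ : Differentiable ℝ n₁ := hn₁.differentiable (by simp)
  have dg₁ : Differentiable ℝ (gvec x₁ n₁) := hg₁.differentiable (by simp)
  have dT : Differentiable ℝ (deriv x) := hTd.differentiable (by simp)
  have dn : Differentiable ℝ n := hn.differentiable (by simp)
  have dK : Differentiable ℝ (geodCurv x₁ n₁) := hK.differentiable (by simp)
  have dτ : Differentiable ℝ (geodTors x₁ n₁) := hτ.differentiable (by simp)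
  have dds : Differentiable ℝ (deriv s) :=
    ((contDiff_infty_iff_deriv.mp hs).2).differentiable (by simp)
  -- pointwise inner facts
  have e11 : ∀ u, (inner ℝ (deriv x₁ u) (deriv x₁ u) : ℝ) = 1 := fun u => by
    rw [real_inner_self_eq_norm_sq, hx₁u u]; norm_num
  have e22 : ∀ u, (inner ℝ (n₁ u) (n₁ u) : ℝ) = 1 := fun u => by
    rw [real_inner_self_eq_norm_sq, hn₁u u]; norm_num
  have e31 : ∀ u, (inner ℝ (gvec x₁ n₁ u) (deriv x₁ u) : ℝ) = 0 := fun u =>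
    inner_cross_right (n₁ u) (deriv x₁ u)
  -- the A/B vector equation, for every t
  have hvec : ∀ t, deriv s t • deriv x (s t) = deriv x₁ t + lam • deriv (gvec x₁ n₁) t := by
    intro t
    have h1 : HasDerivAt (x ∘ s) (deriv s t • deriv x (s t)) t :=
      ((hx.differentiable (by simp) (s t)).hasDerivAt).scomp t
        ((hs.differentiable (by simp) t).hasDerivAt)
    have h2 : HasDerivAt (fun u => x₁ u + lam • gvec x₁ n₁ u)
        (deriv x₁ t + lam • deriv (gvec x₁ n₁) t) t :=
      ((hx₁.differentiable (by simp) t).hasDerivAt).add (((dg₁ t).hasDerivAt).const_smul lam)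
    have hfun : (x ∘ s) = fun u => x₁ u + lam • gvec x₁ n₁ u := funext hB1
    rw [hfun] at h1
    exact h1.unique h2
  -- equation A
  have hA : ∀ t, deriv s t * Real.cos (θ t) = 1 - lam * geodCurv x₁ n₁ t := by
    intro t
    have h := congrArg (fun v => (inner ℝ v (deriv x₁ t) : ℝ)) (hvec t)
    simp only [inner_add_left, real_inner_smul_left] at h
    rw [hB3 t, inner_sub_left, real_inner_smul_left, real_inner_smul_left,
      e11 t, hx₁n t] at h
    have hg'T : (inner ℝ (deriv (gvec x₁ n₁) t) (deriv x₁ t) : ℝ) = - geodCurv x₁ n₁ t := by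
      have h0 := inner_deriv_zero dg₁ dx₁ 0 e31 t
      have h1 : geodCurv x₁ n₁ t = (inner ℝ (gvec x₁ n₁ t) (deriv (deriv x₁) t) : ℝ) :=
        real_inner_comm _ _
      linarith
    rw [hg'T] at h
    linear_combination h
  -- equation B
  have hBt : ∀ t, deriv s t * Real.sin (θ t) = -(lam * geodTors x₁ n₁ t) := by
    intro t
    have h := congrArg (fun v => (inner ℝ v (n₁ t) : ℝ)) (hvec t)
    simp only [inner_add_left, real_inner_smul_left] at h
    rw [hB3 t, inner_sub_left, real_inner_smul_left, real_inner_smul_left, e22 t] at h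
    have e12 : (inner ℝ (deriv x₁ t) (n₁ t) : ℝ) = 0 := by
      rw [real_inner_comm]; exact hx₁n t
    rw [e12] at h
    have hτdef : (inner ℝ (deriv (gvec x₁ n₁) t) (n₁ t) : ℝ) = geodTors x₁ n₁ t := rfl
    rw [hτdef] at h
    linear_combination -h
  intro t h1ne hc
  have hθt : HasDerivAt θ (deriv θ t) t := (hθ.differentiable (by simp) t).hasDerivAt
  have hsinD : HasDerivAt (fun u => Real.sin (θ u)) (Real.cos (θ t) * deriv θ t) t :=
    (Real.hasDerivAt_sin (θ t)).comp t hθt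
  have hcosD : HasDerivAt (fun u => Real.cos (θ u)) (-Real.sin (θ t) * deriv θ t) t :=
    (Real.hasDerivAt_cos (θ t)).comp t hθt
  -- the C vector equation at t
  have hvecC : deriv s t • deriv n (s t) =
      (Real.sin (θ t) • deriv (deriv x₁) t + (Real.cos (θ t) * deriv θ t) • deriv x₁ t)
        + (Real.cos (θ t) • deriv n₁ t + (-Real.sin (θ t) * deriv θ t) • n₁ t) := by
    have h1 : HasDerivAt (n ∘ s) (deriv s t • deriv n (s t)) t :=
      ((hn.differentiable (by simp) (s t)).hasDerivAt).scomp t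
        ((hs.differentiable (by simp) t).hasDerivAt)
    have h2 : HasDerivAt (fun u => Real.sin (θ u) • deriv x₁ u + Real.cos (θ u) • n₁ u)
        ((Real.sin (θ t) • deriv (deriv x₁) t + (Real.cos (θ t) * deriv θ t) • deriv x₁ t)
          + (Real.cos (θ t) • deriv n₁ t + (-Real.sin (θ t) * deriv θ t) • n₁ t)) t :=
      (hsinD.smul (dx₁ t).hasDerivAt).add (hcosD.smul (dn₁ t).hasDerivAt)
    have hfun : (n ∘ s) = fun u => Real.sin (θ u) • deriv x₁ u + Real.cos (θ u) • n₁ u :=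
      funext hB4
    rw [hfun] at h1
    exact h1.unique h2
  -- equation C
  have hC : deriv s t * normCurv x n (s t) = normCurv x₁ n₁ t - deriv θ t := by
    have h := congrArg (fun v => (inner ℝ v (deriv x₁ t) : ℝ)) hvecC
    simp only [inner_add_left, real_inner_smul_left] at h
    have eT₁'T₁ : (inner ℝ (deriv (deriv x₁) t) (deriv x₁ t) : ℝ) = 0 := by
      have h0 := inner_deriv_zero dx₁ dx₁ 1 e11 t
      have h1 := real_inner_comm (deriv (deriv x₁) t) (deriv x₁ t)
      linarith
    have en₁'T₁ : (inner ℝ (deriv n₁ t) (deriv x₁ t) : ℝ) = - normCurv x₁ n₁ t := by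
      have h0 := inner_deriv_zero dn₁ dx₁ 0 hx₁n t
      have h1 := real_inner_comm (deriv (deriv x₁) t) (n₁ t)
      have h2 : normCurv x₁ n₁ t = (inner ℝ (deriv (deriv x₁) t) (n₁ t) : ℝ) := rfl
      linarith
    have hT₁eq : deriv x₁ t = Real.cos (θ t) • deriv x (s t) + Real.sin (θ t) • n (s t) := by
      rw [hB3 t, hB4 t]
      have hp := Real.sin_sq_add_cos_sq (θ t)
      match_scalars <;> nlinarith [hp]
    have hn'n : (inner ℝ (deriv n (s t)) (n (s t)) : ℝ) = 0 := by
      have e' : ∀ u, (inner ℝ (n u) (n u) : ℝ) = 1 := fun u => by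
        rw [real_inner_self_eq_norm_sq, hnu u]; norm_num
      have h0 := inner_deriv_zero dn dn 1 e' (s t)
      have h1 := real_inner_comm (deriv n (s t)) (n (s t))
      linarith
    have hn'T : (inner ℝ (deriv n (s t)) (deriv x (s t)) : ℝ) = - normCurv x n (s t) := by
      have h0 := inner_deriv_zero dn dT 0 hxn (s t)
      have h1 := real_inner_comm (deriv (deriv x) (s t)) (n (s t))
      have h2 : normCurv x n (s t) = (inner ℝ (deriv (deriv x) (s t)) (n (s t)) : ℝ) := rfl
      linarith
    have hLHS : (inner ℝ (deriv n (s t)) (deriv x₁ t) : ℝ)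
        = Real.cos (θ t) * (- normCurv x n (s t)) := by
      rw [hT₁eq, inner_add_right, real_inner_smul_right, real_inner_smul_right, hn'n, hn'T]
      ring
    rw [hLHS, eT₁'T₁, en₁'T₁, e11 t, hx₁n t] at h
    have hgoal : Real.cos (θ t) * (deriv s t * normCurv x n (s t))
        = Real.cos (θ t) * (normCurv x₁ n₁ t - deriv θ t) := by linear_combination -h
    exact mul_left_cancel₀ hc hgoal
  -- differentiate A
  have hA' : deriv (deriv s) t * Real.cos (θ t) + deriv s t * (-Real.sin (θ t) * deriv θ t)
      = -(lam * deriv (geodCurv x₁ n₁) t) := by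
    have h1 : HasDerivAt (fun u => deriv s u * Real.cos (θ u))
        (deriv (deriv s) t * Real.cos (θ t) + deriv s t * (-Real.sin (θ t) * deriv θ t)) t :=
      ((dds t).hasDerivAt).mul hcosD
    have h2 : HasDerivAt (fun u => 1 - lam * geodCurv x₁ n₁ u)
        (-(lam * deriv (geodCurv x₁ n₁) t)) t := by
      simpa using (((dK t).hasDerivAt).const_mul lam).const_sub (1:ℝ)
    have hfun : (fun u => deriv s u * Real.cos (θ u))
        = fun u => 1 - lam * geodCurv x₁ n₁ u := funext hA
    rw [hfun] at h1
    exact h1.unique h2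
  -- differentiate B
  have hB' : deriv (deriv s) t * Real.sin (θ t) + deriv s t * (Real.cos (θ t) * deriv θ t)
      = -(lam * deriv (geodTors x₁ n₁) t) := by
    have h1 : HasDerivAt (fun u => deriv s u * Real.sin (θ u))
        (deriv (deriv s) t * Real.sin (θ t) + deriv s t * (Real.cos (θ t) * deriv θ t)) t :=
      ((dds t).hasDerivAt).mul hsinD
    have h2 : HasDerivAt (fun u => -(lam * geodTors x₁ n₁ u))
        (-(lam * deriv (geodTors x₁ n₁) t)) t :=
      (((dτ t).hasDerivAt).const_mul lam).neg
    have hfun : (fun u => deriv s u * Real.sin (θ u))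
        = fun u => -(lam * geodTors x₁ n₁ u) := funext hBt
    rw [hfun] at h1
    exact h1.unique h2
  -- final algebra
  set D := deriv s t with hD_def
  set E := deriv (deriv s) t
  set c := Real.cos (θ t)
  set si := Real.sin (θ t)
  set P := deriv θ t
  set K := geodCurv x₁ n₁ t
  set K' := deriv (geodCurv x₁ n₁) t
  set τ := geodTors x₁ n₁ t
  set τ' := deriv (geodTors x₁ n₁) t
  set kn := normCurv x n (s t)
  set kn₁ := normCurv x₁ n₁ t
  have hAt : D * c = 1 - lam * K := hA t
  have hBtt : D * si = -(lam * τ) := hBt t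
  have hD : D ≠ 0 := ne_of_gt (hspos t)
  have hpy : si ^ 2 + c ^ 2 = 1 := Real.sin_sq_add_cos_sq (θ t)
  rw [← hAt]
  have h2 : lam ^ 2 * τ ^ 2 = (D * si) ^ 2 := by
    linear_combination (lam * τ - D * si) * hBtt
  have hlt : lam * τ = -(D * si) := by linarith
  have hlk : lam * K' = -(E * c) + D * si * P := by linear_combination hA'
  have h3 : lam ^ 2 * τ * K' = (D * si) * (E * c - D * si * P) := by
    have : lam ^ 2 * τ * K' = (lam * τ) * (lam * K') := by ring
    rw [this, hlt, hlk]; ring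
  have h4 : -lam * τ' = E * si + D * (c * P) := by linear_combination -hB'
  have h5 : kn * (D * c) / c = kn₁ - P := by
    field_simp
    linear_combination hC
  rw [h2, h3, h5, h4]
  have hDc : D * c ≠ 0 := mul_ne_zero hD hc
  field_simp
  ring
end
end

section
/- Let {x, x₁} be a Bertrand D-pair with constant λ ≠ 0, correspondence s and angle function θ. Assume x is an asymptotic line (k_n ≡ 0) and x₁ is a principal line (τ_{g₁} ≡ 0). Then for every s₁ one has k_{n₁}(s₁) · (1 − λ k_{g₁}(s₁)) = 0. -/
noncomputable section

lemma contDiff_gvec {x n : ℝ → E3} (hx : ContDiff ℝ (⊤ : ℕ∞) x) (hn : ContDiff ℝ (⊤ : ℕ∞) n) :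
    ContDiff ℝ (⊤ : ℕ∞) (gvec x n) := by
  have hdx : ContDiff ℝ (⊤ : ℕ∞) (deriv x) := (contDiff_infty_iff_deriv.mp (hx.of_le (by simp))).2
  have hni : ∀ j, ContDiff ℝ (⊤ : ℕ∞) (fun t => n t j) := fun j =>
    (EuclideanSpace.proj (𝕜 := ℝ) j).contDiff.comp (hn.of_le (by simp))
  have hxi : ∀ j, ContDiff ℝ (⊤ : ℕ∞) (fun t => deriv x t j) := fun j =>
    (EuclideanSpace.proj (𝕜 := ℝ) j).contDiff.comp hdx
  rw [contDiff_euclidean]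
  intro i
  fin_cases i <;>
  · simp only [gvec, cross3, Matrix.cons_val_zero, Matrix.cons_val_one, Matrix.head_cons,
      Matrix.cons_val_two, Matrix.tail_cons, Fin.isValue]
    exact ((hni _).mul (hxi _)).sub ((hni _).mul (hxi _))

theorem bertrand_D_stmt_4
    (x n x₁ n₁ : ℝ → E3) (lam : ℝ) (s θ : ℝ → ℝ)
    (hpair : IsBertrandDPair x n x₁ n₁ lam s θ)
    (hasym : ∀ t, normCurv x n t = 0) (hprin₁ : ∀ t, geodTors x₁ n₁ t = 0) :
    ∀ t, normCurv x₁ n₁ t * (1 - lam * geodCurv x₁ n₁ t) = 0 := by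
  obtain ⟨⟨hx, hn, hxu, hnu, hxn⟩, ⟨hx₁, hn₁, hx₁u, hn₁u, hx₁n⟩, hlam, hs, hs',
    hX, hG, hθ, hT, hN⟩ := hpair
  have hdx : ContDiff ℝ (⊤ : ℕ∞) (deriv x) := (contDiff_infty_iff_deriv.mp (hx.of_le (by simp))).2
  have hdx₁ : ContDiff ℝ (⊤ : ℕ∞) (deriv x₁) := (contDiff_infty_iff_deriv.mp (hx₁.of_le (by simp))).2
  have hg₁ : ContDiff ℝ (⊤ : ℕ∞) (gvec x₁ n₁) := contDiff_gvec hx₁ hn₁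
  -- basic inner product facts
  have hn₁n₁ : ∀ t, (inner ℝ (n₁ t) (n₁ t) : ℝ) = 1 := fun t => by
    rw [real_inner_self_eq_norm_mul_norm, hn₁u t]; norm_num
  have hT₁n₁ : ∀ t, (inner ℝ (deriv x₁ t) (n₁ t) : ℝ) = 0 := fun t => by
    rw [real_inner_comm]; exact hx₁n t
  -- Step A : sin θ ≡ 0
  have hsin : ∀ t, Real.sin (θ t) = 0 := by
    intro t
    have h1 : HasDerivAt (fun u => x (s u)) (deriv s t • deriv x (s t)) t :=
      ((hx.differentiable (by simp) (s t)).hasDerivAt).scomp t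
        ((hs.differentiable (by simp) t).hasDerivAt)
    have h2 : HasDerivAt (fun u => x₁ u + lam • gvec x₁ n₁ u)
        (deriv x₁ t + lam • deriv (gvec x₁ n₁) t) t :=
      ((hx₁.differentiable (by simp) t).hasDerivAt).add
        (((hg₁.differentiable (by simp) t).hasDerivAt).const_smul lam)
    have hfun : (fun u => x (s u)) = fun u => x₁ u + lam • gvec x₁ n₁ u := funext hX
    rw [hfun] at h1
    have Eq1 : deriv s t • deriv x (s t) = deriv x₁ t + lam • deriv (gvec x₁ n₁) t :=
      h1.unique h2
    have e1 : (inner ℝ (deriv s t • deriv x (s t)) (n₁ t) : ℝ)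
        = inner ℝ (deriv x₁ t + lam • deriv (gvec x₁ n₁) t) (n₁ t) := by rw [Eq1]
    have hτ : (inner ℝ (deriv (gvec x₁ n₁) t) (n₁ t) : ℝ) = 0 := hprin₁ t
    rw [real_inner_smul_left, inner_add_left, real_inner_smul_left, hτ, hT t,
      inner_sub_left, real_inner_smul_left, real_inner_smul_left, hT₁n₁ t,
      hn₁n₁ t] at e1
    have hst := (hs' t).ne'
    have : deriv s t * -Real.sin (θ t) = 0 := by linear_combination e1
    rcases mul_eq_zero.mp this with h | h
    · exact absurd h hst
    · linarith
  -- Step B : θ' ≡ 0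
  have hcos : ∀ t, Real.cos (θ t) ≠ 0 := by
    intro t hc
    have h := Real.sin_sq_add_cos_sq (θ t)
    rw [hsin t, hc] at h; norm_num at h
  have hθ' : ∀ t, deriv θ t = 0 := by
    intro t
    have h1 : HasDerivAt (fun u => Real.sin (θ u)) (Real.cos (θ t) * deriv θ t) t :=
      (Real.hasDerivAt_sin (θ t)).comp t ((hθ.differentiable (by simp) t).hasDerivAt)
    have hfun : (fun u => Real.sin (θ u)) = fun _ => (0 : ℝ) := funext hsin
    rw [hfun] at h1
    have := h1.unique (hasDerivAt_const t 0)
    rcases mul_eq_zero.mp this with h | h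
    · exact absurd h (hcos t)
    · exact h
  -- ⟪n', T⟫ = 0 along x (since k_n = 0 and ⟪n, T⟫ = 0)
  have hnT : ∀ r, (inner ℝ (deriv n r) (deriv x r) : ℝ) = 0 := by
    intro r
    have h1 : HasDerivAt (fun r => (inner ℝ (n r) (deriv x r) : ℝ))
        ((inner ℝ (n r) (deriv (deriv x) r) : ℝ) + inner ℝ (deriv n r) (deriv x r)) r :=
      HasDerivAt.inner ℝ ((hn.differentiable (by simp) r).hasDerivAt)
        ((hdx.differentiable (by simp) r).hasDerivAt)
    have hfun : (fun r => (inner ℝ (n r) (deriv x r) : ℝ)) = fun _ => (0 : ℝ) := funext hxn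
    rw [hfun] at h1
    have h2 := h1.unique (hasDerivAt_const r 0)
    have hkn : (inner ℝ (n r) (deriv (deriv x) r) : ℝ) = 0 := by
      rw [real_inner_comm]; exact hasym r
    rw [hkn] at h2; linarith
  -- ⟪n₁', T₁⟫ = -k_{n₁}
  have hn₁T₁ : ∀ t, (inner ℝ (deriv n₁ t) (deriv x₁ t) : ℝ) = - normCurv x₁ n₁ t := by
    intro t
    have h1 : HasDerivAt (fun r => (inner ℝ (n₁ r) (deriv x₁ r) : ℝ))
        ((inner ℝ (n₁ t) (deriv (deriv x₁) t) : ℝ) + inner ℝ (deriv n₁ t) (deriv x₁ t)) t :=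
      HasDerivAt.inner ℝ ((hn₁.differentiable (by simp) t).hasDerivAt)
        ((hdx₁.differentiable (by simp) t).hasDerivAt)
    have hfun : (fun r => (inner ℝ (n₁ r) (deriv x₁ r) : ℝ)) = fun _ => (0 : ℝ) := funext hx₁n
    rw [hfun] at h1
    have h2 := h1.unique (hasDerivAt_const t 0)
    have : (inner ℝ (n₁ t) (deriv (deriv x₁) t) : ℝ) = normCurv x₁ n₁ t := real_inner_comm _ _
    rw [this] at h2; linarith
  -- Step C : differentiate the normal relation
  intro t
  have h3 : HasDerivAt (fun u => n (s u)) (deriv s t • deriv n (s t)) t :=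
    ((hn.differentiable (by simp) (s t)).hasDerivAt).scomp t
      ((hs.differentiable (by simp) t).hasDerivAt)
  have hθt : HasDerivAt θ (deriv θ t) t := (hθ.differentiable (by simp) t).hasDerivAt
  have hsinD : HasDerivAt (fun u => Real.sin (θ u)) (Real.cos (θ t) * deriv θ t) t :=
    (Real.hasDerivAt_sin (θ t)).comp t hθt
  have hcosD : HasDerivAt (fun u => Real.cos (θ u)) (-Real.sin (θ t) * deriv θ t) t :=
    (Real.hasDerivAt_cos (θ t)).comp t hθt
  have h4 : HasDerivAt (fun u => Real.sin (θ u) • deriv x₁ u + Real.cos (θ u) • n₁ u)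
      ((Real.sin (θ t) • deriv (deriv x₁) t + (Real.cos (θ t) * deriv θ t) • deriv x₁ t)
        + (Real.cos (θ t) • deriv n₁ t + (-Real.sin (θ t) * deriv θ t) • n₁ t)) t :=
    (hsinD.smul ((hdx₁.differentiable (by simp) t).hasDerivAt)).add
      (hcosD.smul ((hn₁.differentiable (by simp) t).hasDerivAt))
  have hfun : (fun u => n (s u))
      = fun u => Real.sin (θ u) • deriv x₁ u + Real.cos (θ u) • n₁ u := funext hN
  rw [hfun] at h3
  have Eq2 := h3.unique h4
  have e2 : (inner ℝ (deriv s t • deriv n (s t)) (deriv x₁ t) : ℝ)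
      = inner ℝ ((Real.sin (θ t) • deriv (deriv x₁) t
          + (Real.cos (θ t) * deriv θ t) • deriv x₁ t)
        + (Real.cos (θ t) • deriv n₁ t + (-Real.sin (θ t) * deriv θ t) • n₁ t))
          (deriv x₁ t) := by rw [Eq2]
  -- left side vanishes
  have hA : (inner ℝ (deriv n (s t)) (deriv x₁ t) : ℝ) = 0 := by
    have h0 := hnT (s t)
    rw [hT t, hsin t] at h0
    simp only [zero_smul, sub_zero, real_inner_smul_right] at h0
    rcases mul_eq_zero.mp h0 with h | h
    · exact absurd h (hcos t)
    · exact h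
  rw [real_inner_smul_left, hA, inner_add_left, inner_add_left, inner_add_left,
    real_inner_smul_left, real_inner_smul_left, real_inner_smul_left, real_inner_smul_left,
    hsin t, hθ' t, hn₁T₁ t] at e2
  have hkn₁ : normCurv x₁ n₁ t = 0 := by
    have : Real.cos (θ t) * normCurv x₁ n₁ t = 0 := by linarith [e2]
    rcases mul_eq_zero.mp this with h | h
    · exact absurd h (hcos t)
    · exact h
  rw [hkn₁, zero_mul]
end
end

section
/- Let {x, x₁} be a Bertrand D-pair with constant λ ≠ 0, correspondence s and angle function θ. If x₁ is a geodesic (k_{g₁} ≡ 0), then for every s₁ the geodesic curvature of x satisfies k_g(s(s₁)) = −λ τ_g(s(s₁)) τ_{g₁}(s₁). -/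
noncomputable section

set_option linter.unreachableTactic false
set_option linter.unnecessarySeqFocus false
set_option linter.unusedTactic false

lemma hasDerivAt_cross3 {f g : ℝ → E3} {f' g' : E3} {t : ℝ}
    (hf : HasDerivAt f f' t) (hg : HasDerivAt g g' t) :
    HasDerivAt (fun u => cross3 (f u) (g u)) (cross3 f' (g t) + cross3 (f t) g') t := by
  have hfi : ∀ i, HasDerivAt (fun u => f u i) (f' i) t := fun i => by
    exact (EuclideanSpace.proj i).hasFDerivAt.comp_hasDerivAt t hf
  have hgi : ∀ i, HasDerivAt (fun u => g u i) (g' i) t := fun i => by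
    exact (EuclideanSpace.proj i).hasFDerivAt.comp_hasDerivAt t hg
  set e : E3 ≃L[ℝ] (Fin 3 → ℝ) := PiLp.continuousLinearEquiv 2 ℝ _ with he
  have key : HasDerivAt (fun u => (e (cross3 (f u) (g u)))) (e (cross3 f' (g t) + cross3 (f t) g')) t := by
    apply hasDerivAt_pi.2
    intro i
    fin_cases i
    · simp [he, cross3]
      convert (((hfi 1).mul (hgi 2)).sub ((hfi 2).mul (hgi 1))) using 1 <;>
        first
          | rfl
          | ring
          | (funext u; ring)
    · simp [he, cross3]
      convert (((hfi 2).mul (hgi 0)).sub ((hfi 0).mul (hgi 2))) using 1 <;>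
        first
          | rfl
          | ring
          | (funext u; ring)
    · simp [he, cross3]
      convert (((hfi 0).mul (hgi 1)).sub ((hfi 1).mul (hgi 0))) using 1 <;>
        first
          | rfl
          | ring
          | (funext u; ring)
  have := (e.symm : (Fin 3 → ℝ) →L[ℝ] E3).hasFDerivAt.comp_hasDerivAt t key
  have h2 : (⇑(e.symm : (Fin 3 → ℝ) →L[ℝ] E3) ∘ fun u => e (cross3 (f u) (g u))) =
      fun u => cross3 (f u) (g u) := by
    funext u; simp
  have h3 : (e.symm : (Fin 3 → ℝ) →L[ℝ] E3) (e (cross3 f' (g t) + cross3 (f t) g')) =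
      cross3 f' (g t) + cross3 (f t) g' := by simp
  rw [h2, h3] at this
  exact this

theorem bertrand_D_stmt_8
    (x n x₁ n₁ : ℝ → E3) (lam : ℝ) (s θ : ℝ → ℝ)
    (hpair : IsBertrandDPair x n x₁ n₁ lam s θ)
    (hgeo₁ : ∀ t, geodCurv x₁ n₁ t = 0) :
    ∀ t, geodCurv x n (s t) = -lam * geodTors x n (s t) * geodTors x₁ n₁ t := by
  obtain ⟨hD, hD₁, hlam, hs, hs', hxEq, hgEq, hθ, hT, hnEq⟩ := hpair
  obtain ⟨hxs, hns, hxu, hnu, hno⟩ := hD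
  obtain ⟨hxs₁, hns₁, hxu₁, hnu₁, hno₁⟩ := hD₁
  intro t
  have hdx : ContDiff ℝ ((⊤ : ℕ∞) : WithTop ℕ∞) (deriv x) :=
    (contDiff_infty_iff_deriv.mp (hxs.of_le (by simp))).2
  have hdx₁ : ContDiff ℝ ((⊤ : ℕ∞) : WithTop ℕ∞) (deriv x₁) :=
    (contDiff_infty_iff_deriv.mp (hxs₁.of_le (by simp))).2
  set σ := s t with hσ
  set c := deriv s t with hc
  have hcpos : 0 < c := hs' t
  have hc0 : c ≠ 0 := ne_of_gt hcpos
  -- basic HasDerivAt facts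
  have Hx₁ : HasDerivAt x₁ (deriv x₁ t) t :=
    ((hxs₁.differentiable (by simp)) t).hasDerivAt
  have Hn₁ : HasDerivAt n₁ (deriv n₁ t) t :=
    ((hns₁.differentiable (by simp)) t).hasDerivAt
  have HT₁ : HasDerivAt (deriv x₁) (deriv (deriv x₁) t) t :=
    ((hdx₁.differentiable (by simp)) t).hasDerivAt
  have Hxσ : HasDerivAt x (deriv x σ) σ :=
    ((hxs.differentiable (by simp)) σ).hasDerivAt
  have HTσ : HasDerivAt (deriv x) (deriv (deriv x) σ) σ :=
    ((hdx.differentiable (by simp)) σ).hasDerivAt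
  have Hnσ : HasDerivAt n (deriv n σ) σ :=
    ((hns.differentiable (by simp)) σ).hasDerivAt
  have Hs : HasDerivAt s c t :=
    ((hs.differentiable (by simp)) t).hasDerivAt
  -- derivative of gvec x₁ n₁ at t
  have Hg₁0 : HasDerivAt (gvec x₁ n₁)
      (cross3 (deriv n₁ t) (deriv x₁ t) + cross3 (n₁ t) (deriv (deriv x₁) t)) t :=
    hasDerivAt_cross3 Hn₁ HT₁
  set G₁ := deriv (gvec x₁ n₁) t with hG₁
  have Hg₁ : HasDerivAt (gvec x₁ n₁) G₁ t := by rw [hG₁, Hg₁0.deriv]; exact Hg₁0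
  -- derivative of gvec x n at σ
  have Hg0 : HasDerivAt (gvec x n)
      (cross3 (deriv n σ) (deriv x σ) + cross3 (n σ) (deriv (deriv x) σ)) σ :=
    hasDerivAt_cross3 Hnσ HTσ
  set G := deriv (gvec x n) σ with hG
  have Hg : HasDerivAt (gvec x n) G σ := by rw [hG, Hg0.deriv]; exact Hg0
  -- abbreviations
  set C := Real.cos (θ t) with hC
  set S := Real.sin (θ t) with hS
  set τ := geodTors x₁ n₁ t with hτ
  have hτG : τ = (inner ℝ G₁ (n₁ t) : ℝ) := rfl
  -- E1 : c • deriv x σ = deriv x₁ t + lam • G₁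
  have E1 : c • deriv x σ = deriv x₁ t + lam • G₁ := by
    have hL : HasDerivAt (fun u => x (s u)) (c • deriv x σ) t := Hxσ.scomp t Hs
    have hR : HasDerivAt (fun u => x₁ u + lam • gvec x₁ n₁ u) (deriv x₁ t + lam • G₁) t :=
      Hx₁.add (Hg₁.const_smul lam)
    have hfun : (fun u => x (s u)) = fun u => x₁ u + lam • gvec x₁ n₁ u := funext hxEq
    exact (hfun ▸ hL).unique hR
  -- E2 : c • G = G₁
  have E2 : c • G = G₁ := by
    have hL : HasDerivAt (fun u => gvec x n (s u)) (c • G) t := Hg.scomp t Hs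
    have hfun : (fun u => gvec x n (s u)) = gvec x₁ n₁ := funext hgEq
    exact (hfun ▸ hL).unique Hg₁
  -- basic inner products
  have hTT : (inner ℝ (deriv x₁ t) (deriv x₁ t) : ℝ) = 1 := by
    rw [real_inner_self_eq_norm_mul_norm, hxu₁ t]; ring
  have hnn : (inner ℝ (n₁ t) (n₁ t) : ℝ) = 1 := by
    rw [real_inner_self_eq_norm_mul_norm, hnu₁ t]; ring
  have hnT : (inner ℝ (n₁ t) (deriv x₁ t) : ℝ) = 0 := hno₁ t
  have hTn : (inner ℝ (deriv x₁ t) (n₁ t) : ℝ) = 0 := by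
    rw [real_inner_comm]; exact hnT
  -- ⟪G₁, T₁⟫ = 0 (uses geodesic hypothesis)
  have ha : (inner ℝ G₁ (deriv x₁ t) : ℝ) = 0 := by
    have hzero : ∀ u, (inner ℝ (gvec x₁ n₁ u) (deriv x₁ u) : ℝ) = 0 := fun u =>
      inner_cross_right (n₁ u) (deriv x₁ u)
    have hD : HasDerivAt (fun u => (inner ℝ (gvec x₁ n₁ u) (deriv x₁ u) : ℝ))
        ((inner ℝ (gvec x₁ n₁ t) (deriv (deriv x₁) t) : ℝ) + inner ℝ G₁ (deriv x₁ t)) t :=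
      HasDerivAt.inner ℝ Hg₁ HT₁
    have hfun : (fun u => (inner ℝ (gvec x₁ n₁ u) (deriv x₁ u) : ℝ)) = fun _ => (0 : ℝ) :=
      funext hzero
    have h0 : (inner ℝ (gvec x₁ n₁ t) (deriv (deriv x₁) t) : ℝ) + inner ℝ G₁ (deriv x₁ t) = 0 :=
      (hfun ▸ hD).unique (hasDerivAt_const t 0)
    have hk : (inner ℝ (gvec x₁ n₁ t) (deriv (deriv x₁) t) : ℝ) = 0 := by
      have := hgeo₁ t
      rw [geodCurv] at this
      rw [real_inner_comm]; exact this
    linarith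
  -- geodCurv x n σ = -⟪deriv x σ, G⟫
  have hkg : geodCurv x n σ = -(inner ℝ (deriv x σ) G : ℝ) := by
    have hzero : ∀ u, (inner ℝ (deriv x u) (gvec x n u) : ℝ) = 0 := fun u => by
      rw [real_inner_comm]; exact inner_cross_right (n u) (deriv x u)
    have hD : HasDerivAt (fun u => (inner ℝ (deriv x u) (gvec x n u) : ℝ))
        ((inner ℝ (deriv x σ) G : ℝ) + inner ℝ (deriv (deriv x) σ) (gvec x n σ)) σ :=
      HasDerivAt.inner ℝ HTσ Hg
    have hfun : (fun u => (inner ℝ (deriv x u) (gvec x n u) : ℝ)) = fun _ => (0 : ℝ) :=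
      funext hzero
    have h0 : (inner ℝ (deriv x σ) G : ℝ) + inner ℝ (deriv (deriv x) σ) (gvec x n σ) = 0 :=
      (hfun ▸ hD).unique (hasDerivAt_const σ 0)
    rw [geodCurv]; linarith
  -- scalar equations from E1
  have hTθ : deriv x σ = C • deriv x₁ t - S • n₁ t := hT t
  have hnθ : n σ = S • deriv x₁ t + C • n₁ t := hnEq t
  have eq1 : c * C = 1 := by
    have := congrArg (fun v => (inner ℝ v (deriv x₁ t) : ℝ)) E1
    simp only [inner_add_left, real_inner_smul_left, hTθ, inner_sub_left] at this
    rw [hTT, hnT, ha] at this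
    linarith
  have eq2 : -(c * S) = lam * τ := by
    have := congrArg (fun v => (inner ℝ v (n₁ t) : ℝ)) E1
    simp only [inner_add_left, real_inner_smul_left, hTθ, inner_sub_left] at this
    rw [hnn, hTn, ← hτG] at this
    linarith
  -- scalar equations from E2
  have eq3 : c * geodTors x n σ = C * τ := by
    have := congrArg (fun v => (inner ℝ v (n σ) : ℝ)) E2
    simp only [real_inner_smul_left] at this
    have hR : (inner ℝ G₁ (n σ) : ℝ) = C * τ := by
      rw [hnθ, inner_add_right, real_inner_smul_right, real_inner_smul_right, ha, hτG]
      ring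
    have hL : (inner ℝ G (n σ) : ℝ) = geodTors x n σ := rfl
    rw [hL, hR] at this
    exact this
  have eq4 : c * (inner ℝ (deriv x σ) G : ℝ) = -(S * τ) := by
    have := congrArg (fun v => (inner ℝ v (deriv x σ) : ℝ)) E2
    simp only [real_inner_smul_left] at this
    have hR : (inner ℝ G₁ (deriv x σ) : ℝ) = -(S * τ) := by
      rw [hTθ, inner_sub_right, real_inner_smul_right, real_inner_smul_right, ha, hτG]
      ring
    rw [hR] at this
    rw [real_inner_comm] at this
    linarith
  -- finish
  have key : c ^ 2 * (geodCurv x n σ + lam * geodTors x n σ * τ) = 0 := by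
    have e4 : c * geodCurv x n σ = S * τ := by rw [hkg]; linarith
    linear_combination c * e4 + lam * τ * c * eq3 + lam * τ ^ 2 * eq1 - τ * eq2
  have : geodCurv x n σ + lam * geodTors x n σ * τ = 0 := by
    have hc2 : c ^ 2 ≠ 0 := pow_ne_zero _ hc0
    rcases mul_eq_zero.mp key with h | h
    · exact absurd h hc2
    · exact h
  linarith
end
end

section
/- Let {x, x₁} be a Bertrand D-pair with constant λ ≠ 0, correspondence s and angle function θ. If x is a geodesic (k_g ≡ 0), then for every s₁ the geodesic curvature of x₁ satisfies k_{g₁}(s₁) = λ τ_g(s(s₁)) τ_{g₁}(s₁). -/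
noncomputable section

lemma inner_cross3_right (a b : E3) : (inner ℝ b (cross3 a b) : ℝ) = 0 := by
  simp only [cross3, PiLp.inner_apply, RCLike.inner_apply, conj_trivial, Fin.sum_univ_three]
  simp [Matrix.cons_val_zero, Matrix.cons_val_one, Matrix.head_cons]
  ring

lemma contDiff_cross3 {f h : ℝ → E3} (hf : ContDiff ℝ (⊤ : ℕ∞) f)
    (hh : ContDiff ℝ (⊤ : ℕ∞) h) :
    ContDiff ℝ (⊤ : ℕ∞) (fun t => cross3 (f t) (h t)) := by
  have hfc : ∀ i, ContDiff ℝ (⊤ : ℕ∞) (fun t => f t i) := fun i =>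
    (EuclideanSpace.proj i : E3 →L[ℝ] ℝ).contDiff.comp hf
  have hhc : ∀ i, ContDiff ℝ (⊤ : ℕ∞) (fun t => h t i) := fun i =>
    (EuclideanSpace.proj i : E3 →L[ℝ] ℝ).contDiff.comp hh
  rw [contDiff_euclidean]
  intro i
  fin_cases i <;>
    simp only [cross3, Matrix.cons_val_zero, Matrix.cons_val_one, Matrix.head_cons,
      Fin.mk_one, Matrix.cons_val_two, Matrix.tail_cons, Fin.isValue] <;>
  · first
    | exact ((hfc 1).mul (hhc 2)).sub ((hfc 2).mul (hhc 1))
    | exact ((hfc 2).mul (hhc 0)).sub ((hfc 0).mul (hhc 2))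
    | exact ((hfc 0).mul (hhc 1)).sub ((hfc 1).mul (hhc 0))

theorem bertrand_D_stmt_9
    (x n x₁ n₁ : ℝ → E3) (lam : ℝ) (s θ : ℝ → ℝ)
    (hpair : IsBertrandDPair x n x₁ n₁ lam s θ)
    (hgeo : ∀ t, geodCurv x n t = 0) :
    ∀ t, geodCurv x₁ n₁ t = lam * geodTors x n (s t) * geodTors x₁ n₁ t := by
  obtain ⟨⟨hsmx, hsmn, hux, hun, hperp⟩, ⟨hsmx1, hsmn1, hux1, hun1, hperp1⟩,
    hlam, hsms, hspos, hBx, hBg, hsmθ, hT, hN⟩ := hpair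
  -- smoothness bookkeeping
  have h1le : ((⊤ : ℕ∞) : WithTop ℕ∞) ≠ 0 := by simp
  have hx' : ContDiff ℝ (⊤ : ℕ∞) x := hsmx.of_le (by simp)
  have hx1' : ContDiff ℝ (⊤ : ℕ∞) x₁ := hsmx1.of_le (by simp)
  have hn' : ContDiff ℝ (⊤ : ℕ∞) n := hsmn.of_le (by simp)
  have hn1' : ContDiff ℝ (⊤ : ℕ∞) n₁ := hsmn1.of_le (by simp)
  have hs' : ContDiff ℝ (⊤ : ℕ∞) s := hsms.of_le (by simp)
  have hTx : ContDiff ℝ (⊤ : ℕ∞) (deriv x) := (contDiff_infty_iff_deriv.mp hx').2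
  have hTx1 : ContDiff ℝ (⊤ : ℕ∞) (deriv x₁) := (contDiff_infty_iff_deriv.mp hx1').2
  have hg : ContDiff ℝ (⊤ : ℕ∞) (gvec x n) := contDiff_cross3 hn' hTx
  have hg1 : ContDiff ℝ (⊤ : ℕ∞) (gvec x₁ n₁) := contDiff_cross3 hn1' hTx1
  have dTx : Differentiable ℝ (deriv x) := hTx.differentiable h1le
  have dTx1 : Differentiable ℝ (deriv x₁) := hTx1.differentiable h1le
  have dg : Differentiable ℝ (gvec x n) := hg.differentiable h1le
  have dg1 : Differentiable ℝ (gvec x₁ n₁) := hg1.differentiable h1le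
  have dx : Differentiable ℝ x := hx'.differentiable h1le
  have dx1 : Differentiable ℝ x₁ := hx1'.differentiable h1le
  have ds : Differentiable ℝ s := hs'.differentiable h1le
  intro t
  -- Equation A : derivative of gvec x₁ n₁ via the chain rule
  have hg1eq : gvec x₁ n₁ = (gvec x n) ∘ s := funext fun r => (hBg r).symm
  have hA : deriv (gvec x₁ n₁) t = deriv s t • deriv (gvec x n) (s t) := by
    rw [hg1eq]; exact deriv.scomp t (dg (s t)) (ds t)
  -- Equation B : differentiate x ∘ s = x₁ + lam • g₁
  have hcomp : (x ∘ s) = fun r => x₁ r + lam • gvec x₁ n₁ r := funext fun r => by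
    simp [Function.comp, hBx r]
  have hBeq : deriv s t • deriv x (s t) = deriv x₁ t + lam • deriv (gvec x₁ n₁) t := by
    have h1 : deriv (x ∘ s) t = deriv s t • deriv x (s t) :=
      deriv.scomp t (dx (s t)) (ds t)
    have h2 : deriv (fun r => x₁ r + lam • gvec x₁ n₁ r) t
        = deriv x₁ t + lam • deriv (gvec x₁ n₁) t := by
      rw [deriv_fun_add (g := fun r => lam • gvec x₁ n₁ r) (dx1 t) ((dg1 t).const_smul lam), deriv_fun_const_smul lam (dg1 t)]
    rw [← h1, hcomp, h2]
  -- ⟪T, g⟫ ≡ 0 for both curves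
  have hTg : ∀ r, (inner ℝ (deriv x r) (gvec x n r) : ℝ) = 0 := fun r =>
    inner_cross3_right _ _
  have hTg1 : ∀ r, (inner ℝ (deriv x₁ r) (gvec x₁ n₁ r) : ℝ) = 0 := fun r =>
    inner_cross3_right _ _
  -- differentiating ⟪T, g⟫ = 0 at s t and using k_g = 0 there
  have hTg' : (inner ℝ (deriv x (s t)) (deriv (gvec x n) (s t)) : ℝ) = 0 := by
    have h2 := deriv_inner_apply (𝕜 := ℝ) (dTx (s t)) (dg (s t))
    have h0 : deriv (fun r => (inner ℝ (deriv x r) (gvec x n r) : ℝ)) (s t) = 0 := by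
      have : (fun r => (inner ℝ (deriv x r) (gvec x n r) : ℝ)) = fun _ => 0 :=
        funext hTg
      rw [this, deriv_const]
    have hk := hgeo (s t)
    unfold geodCurv at hk
    rw [h0] at h2
    linarith [h2.symm]
  -- differentiating ⟪T₁, g₁⟫ = 0 at t
  have hTg1' : (inner ℝ (deriv x₁ t) (deriv (gvec x₁ n₁) t) : ℝ) = - geodCurv x₁ n₁ t := by
    have h2 := deriv_inner_apply (𝕜 := ℝ) (dTx1 t) (dg1 t)
    have h0 : deriv (fun r => (inner ℝ (deriv x₁ r) (gvec x₁ n₁ r) : ℝ)) t = 0 := by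
      have : (fun r => (inner ℝ (deriv x₁ r) (gvec x₁ n₁ r) : ℝ)) = fun _ => 0 :=
        funext hTg1
      rw [this, deriv_const]
    unfold geodCurv
    rw [h0] at h2
    linarith [h2.symm]
  -- inverse frame relation : T₁ = cos θ • T(s t) + sin θ • n(s t)
  have hframe : Real.cos (θ t) • deriv x (s t) + Real.sin (θ t) • n (s t)
      = deriv x₁ t := by
    rw [hT t, hN t]
    have hpy := Real.sin_sq_add_cos_sq (θ t)
    match_scalars <;> nlinarith [hpy]
  -- geodesic curvature of x₁
  have keq : geodCurv x₁ n₁ t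
      = -(deriv s t * Real.sin (θ t) * geodTors x n (s t)) := by
    have h3 : (inner ℝ (deriv x₁ t) (deriv (gvec x₁ n₁) t) : ℝ)
        = deriv s t * (Real.sin (θ t) * geodTors x n (s t)) := by
      rw [hA, real_inner_smul_right, ← hframe, inner_add_left, real_inner_smul_left,
        real_inner_smul_left, hTg']
      unfold geodTors
      rw [real_inner_comm]
      ring
    rw [h3] at hTg1'
    linarith [hTg1']
  -- geodesic torsion relation from equation B
  have teq : -(deriv s t * Real.sin (θ t)) = lam * geodTors x₁ n₁ t := by
    have h4 := congrArg (fun v : E3 => (inner ℝ (n₁ t) v : ℝ)) hBeq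
    simp only [inner_add_right, real_inner_smul_right] at h4
    rw [hT t] at h4
    rw [inner_sub_right, real_inner_smul_right, real_inner_smul_right, hperp1 t] at h4
    have hnn : (inner ℝ (n₁ t) (n₁ t) : ℝ) = 1 := by
      rw [real_inner_self_eq_norm_sq, hun1 t]; norm_num
    rw [hnn] at h4
    have hτ : (inner ℝ (n₁ t) (deriv (gvec x₁ n₁) t) : ℝ) = geodTors x₁ n₁ t := by
      unfold geodTors; rw [real_inner_comm]
    rw [hτ] at h4
    linarith [h4]
  rw [keq]
  have : deriv s t * Real.sin (θ t) = -(lam * geodTors x₁ n₁ t) := by linarith [teq]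
  rw [this]
  ring
end
end

section
/- Let {x, x₁} be a Bertrand D-pair with constant λ ≠ 0, correspondence s and angle function θ. Then for every s₁ the normal curvatures satisfy k_{n₁}(s₁) = k_n(s(s₁)) · s'(s₁) + θ'(s₁). -/
noncomputable section

/-- derivative of a unit vector field is orthogonal to it. -/
lemma aux_unit_deriv {f : ℝ → E3} (hf : Differentiable ℝ f) (h : ∀ u, ‖f u‖ = 1) (t : ℝ) :
    (inner ℝ (deriv f t) (f t) : ℝ) = 0 := by
  have hd : HasDerivAt (fun u => (inner ℝ (f u) (f u) : ℝ))
      ((inner ℝ (f t) (deriv f t) : ℝ) + (inner ℝ (deriv f t) (f t) : ℝ)) t :=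
    (hf t).hasDerivAt.inner ℝ (hf t).hasDerivAt
  have hc : HasDerivAt (fun u => (inner ℝ (f u) (f u) : ℝ)) 0 t := by
    have : (fun u => (inner ℝ (f u) (f u) : ℝ)) = fun _ => (1 : ℝ) := by
      funext u
      rw [real_inner_self_eq_norm_sq, h u]; norm_num
    rw [this]; exact hasDerivAt_const _ _
  have h2 := hd.unique hc
  rw [real_inner_comm (f t)] at h2
  rw [real_inner_comm]
  linarith

/-- derivative of orthogonality relation. -/
lemma aux_orth_deriv {f g : ℝ → E3} (hf : Differentiable ℝ f) (hg : Differentiable ℝ g)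
    (h : ∀ u, (inner ℝ (f u) (g u) : ℝ) = 0) (t : ℝ) :
    (inner ℝ (f t) (deriv g t) : ℝ) + (inner ℝ (deriv f t) (g t) : ℝ) = 0 := by
  have hd : HasDerivAt (fun u => (inner ℝ (f u) (g u) : ℝ))
      ((inner ℝ (f t) (deriv g t) : ℝ) + (inner ℝ (deriv f t) (g t) : ℝ)) t :=
    (hf t).hasDerivAt.inner ℝ (hg t).hasDerivAt
  have hc : HasDerivAt (fun u => (inner ℝ (f u) (g u) : ℝ)) 0 t := by
    have : (fun u => (inner ℝ (f u) (g u) : ℝ)) = fun _ => (0 : ℝ) := funext h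
    rw [this]; exact hasDerivAt_const _ _
  exact hd.unique hc

theorem bertrand_D_stmt_10
    (x n x₁ n₁ : ℝ → E3) (lam : ℝ) (s θ : ℝ → ℝ)
    (hpair : IsBertrandDPair x n x₁ n₁ lam s θ) :
    ∀ t, normCurv x₁ n₁ t = normCurv x n (s t) * deriv s t + deriv θ t := by
  obtain ⟨⟨hx, hn, hxu, hnu, hxn⟩, ⟨hx₁, hn₁, hx₁u, hn₁u, hx₁n₁⟩, hlam, hs, hs', hpos,
    hg, hθ, hT, hN⟩ := hpair
  intro t
  -- differentiability facts
  have hT1 : ContDiff ℝ (⊤ : ℕ∞) (deriv x₁) := (contDiff_infty_iff_deriv.mp (hx₁.of_le (by simp))).2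
  have hTd : ContDiff ℝ (⊤ : ℕ∞) (deriv x) := (contDiff_infty_iff_deriv.mp (hx.of_le (by simp))).2
  have hT1d : Differentiable ℝ (deriv x₁) := hT1.differentiable (by simp)
  have hn₁d : Differentiable ℝ n₁ := hn₁.differentiable (by simp)
  have hsd : Differentiable ℝ s := hs.differentiable (by simp)
  have hθd : Differentiable ℝ θ := hθ.differentiable (by simp)
  -- LHS has-deriv: d/dt of (deriv x (s t))
  have hA : HasDerivAt (deriv x) (deriv (deriv x) (s t)) (s t) :=
    ((hTd.differentiable (by simp)) (s t)).hasDerivAt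
  have hB : HasDerivAt s (deriv s t) t := (hsd t).hasDerivAt
  have h1 : HasDerivAt (fun u => deriv x (s u))
      (deriv s t • deriv (deriv x) (s t)) t := by
    simpa [Function.comp_def] using hA.scomp t hB
  -- RHS has-deriv
  have hcos : HasDerivAt (fun u => Real.cos (θ u)) (-Real.sin (θ t) * deriv θ t) t := by
    simpa [mul_comm, Function.comp_def] using (Real.hasDerivAt_cos (θ t)).comp t (hθd t).hasDerivAt
  have hsin : HasDerivAt (fun u => Real.sin (θ u)) (Real.cos (θ t) * deriv θ t) t := by
    simpa [mul_comm, Function.comp_def] using (Real.hasDerivAt_sin (θ t)).comp t (hθd t).hasDerivAt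
  have h2 := (hcos.smul (hT1d t).hasDerivAt).sub (hsin.smul (hn₁d t).hasDerivAt)
  have hfun : (fun u => deriv x (s u)) =
      (fun u => Real.cos (θ u) • deriv x₁ u - Real.sin (θ u) • n₁ u) := funext hT
  rw [hfun] at h1
  have hd := h1.unique h2
  -- take inner product with n (s t)
  have key := congrArg (fun v => (inner ℝ v (Real.sin (θ t) • deriv x₁ t
      + Real.cos (θ t) • n₁ t) : ℝ)) hd
  -- inner product facts
  have e1 : (inner ℝ (deriv x₁ t) (deriv x₁ t) : ℝ) = 1 := by
    rw [real_inner_self_eq_norm_sq, hx₁u t]; norm_num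
  have e2 : (inner ℝ (n₁ t) (n₁ t) : ℝ) = 1 := by
    rw [real_inner_self_eq_norm_sq, hn₁u t]; norm_num
  have e3 : (inner ℝ (n₁ t) (deriv x₁ t) : ℝ) = 0 := hx₁n₁ t
  have e4 : (inner ℝ (deriv x₁ t) (n₁ t) : ℝ) = 0 := by
    rw [real_inner_comm]; exact e3
  have e5 : (inner ℝ (deriv (deriv x₁) t) (deriv x₁ t) : ℝ) = 0 := aux_unit_deriv hT1d hx₁u t
  have e6 : (inner ℝ (deriv n₁ t) (n₁ t) : ℝ) = 0 := aux_unit_deriv hn₁d hn₁u t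
  have e7 : (inner ℝ (n₁ t) (deriv (deriv x₁) t) : ℝ) + (inner ℝ (deriv n₁ t) (deriv x₁ t) : ℝ) = 0 :=
    aux_orth_deriv hn₁d hT1d hx₁n₁ t
  have e8 : (inner ℝ (deriv (deriv x₁) t) (n₁ t) : ℝ) = normCurv x₁ n₁ t := rfl
  have e9 : (inner ℝ (n₁ t) (deriv (deriv x₁) t) : ℝ) = normCurv x₁ n₁ t := by
    rw [real_inner_comm]; rfl
  have e10 : (inner ℝ (n₁ t) (deriv n₁ t) : ℝ) = 0 := by
    rw [real_inner_comm]; exact e6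
  have e11 : (inner ℝ (deriv x₁ t) (deriv (deriv x₁) t) : ℝ) = 0 := by
    rw [real_inner_comm]; exact e5
  have e12' : (inner ℝ (deriv n₁ t) (deriv x₁ t) : ℝ) = - normCurv x₁ n₁ t := by
    linarith [e7, e9]
  have e12 : (inner ℝ (deriv x₁ t) (deriv n₁ t) : ℝ) = - normCurv x₁ n₁ t := by
    rw [real_inner_comm]; exact e12'
  simp only [inner_add_left, inner_add_right, inner_sub_left, inner_sub_right,
    real_inner_smul_left, real_inner_smul_right, starRingEnd_apply, star_trivial,
    e1, e2, e3, e4, e5, e6, e8, e9, e10, e11, e12, e12'] at key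
  have hpyth := Real.sin_sq_add_cos_sq (θ t)
  have hkn : normCurv x n (s t) =
      Real.sin (θ t) * (inner ℝ (deriv (deriv x) (s t)) (deriv x₁ t) : ℝ)
      + Real.cos (θ t) * (inner ℝ (deriv (deriv x) (s t)) (n₁ t) : ℝ) := by
    show (inner ℝ (deriv (deriv x) (s t)) (n (s t)) : ℝ) = _
    rw [hN t]
    simp only [inner_add_right, real_inner_smul_right]
  linear_combination -key - deriv s t * hkn + (deriv θ t - normCurv x₁ n₁ t) * hpyth
end
end
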